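/- There exists a constant C > 0 such that for every real sequence a ∈ ℓ^{p₀}(ℤ) for some 1 ≤ p₀ < ∞, every γ > 0 and every λ > 0, the cardinality of {n ∈ ℤ : M_d a(n) > 2λ and M^# a(n) ≤ γλ} is at most C·γ times the cardinality of {n ∈ ℤ : M_d a(n) > λ} (good-λ inequality relating the dyadic and sharp maximal operators). -/

import Mathlib

open scoped ENNReal
open MeasureTheory

/-- An interval in ℤ: a nonempty finite set of consecutive integers. -/
def IsIntervalZ (I : Finset ℤ) : Prop := ∃ n m : ℤ, n ≤ m ∧ I = Finset.Icc n m

/-- The dyadic interval I_{N,j} = {(j-1)2^N + 1, …, j·2^N}. -/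
noncomputable def dyadicI (N : ℕ) (j : ℤ) : Finset ℤ := Finset.Icc ((j - 1) * 2 ^ N + 1) (j * 2 ^ N)

/-- A dyadic interval is one of the form I_{N,j} with N a positive integer. -/
def IsDyadicZ (I : Finset ℤ) : Prop := ∃ N : ℕ, 0 < N ∧ ∃ j : ℤ, I = dyadicI N j

/-- The (uncentered) Hardy–Littlewood maximal operator. -/
noncomputable def Mop (a : ℤ → ℝ) (m : ℤ) : ℝ≥0∞ :=
  ⨆ (I : Finset ℤ) (_ : IsIntervalZ I) (_ : m ∈ I),
    (∑ n ∈ I, ENNReal.ofReal |a n|) / I.card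

/-- The centered Hardy–Littlewood maximal operator
`M′a(m) = sup_{r>0} (1/(2r)) ∑_{n=-r}^{r} |a(m-n)|`. -/
noncomputable def Mc (a : ℤ → ℝ) (m : ℤ) : ℝ≥0∞ :=
  ⨆ (r : ℕ) (_ : 0 < r),
    (∑ n ∈ Finset.Icc (-(r : ℤ)) (r : ℤ), ENNReal.ofReal |a (m - n)|) / (2 * (r : ℝ≥0∞))

/-- The dyadic maximal operator. -/
noncomputable def Md (a : ℤ → ℝ) (m : ℤ) : ℝ≥0∞ :=
  ⨆ (I : Finset ℤ) (_ : IsDyadicZ I) (_ : m ∈ I),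
    (∑ k ∈ I, ENNReal.ofReal |a k|) / I.card

/-- The average `a_I` of a sequence on a finite set. -/
noncomputable def avgI (a : ℤ → ℝ) (I : Finset ℤ) : ℝ := (∑ m ∈ I, a m) / I.card

/-- The sharp maximal operator. -/
noncomputable def Msharp (a : ℤ → ℝ) (m : ℤ) : ℝ≥0∞ :=
  ⨆ (I : Finset ℤ) (_ : IsIntervalZ I) (_ : m ∈ I),
    (∑ n ∈ I, ENNReal.ofReal |a n - avgI a I|) / I.card

/-!
If `{M_d a > λ}` is infinite there is nothing to prove. Otherwise it is the disjoint union of the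
maximal dyadic intervals `I` on which `|a|` has average `> λ`. The dyadic parent `I'` of such an
`I` has average `≤ λ`, so `|a_{I'}| ≤ λ`. If some point of `I` has `M^# a ≤ γλ`, then
`b = (a - a_{I'}) 1_{I'}` has `‖b‖₁ ≤ γλ|I'| = 2γλ|I|`, and every point of `I` with `M_d a > 2λ`
has `M_d b > λ`. The weak type (1,1) bound for `M_d`, proved with the same maximal intervals,
gives `|I ∩ {M_d a > 2λ}| ≤ 2γ|I|`; summing over `I` gives the theorem with `C = 2`.
-/

open Finset

lemma mem_dyadicI_iff {N : ℕ} {j n : ℤ} : n ∈ dyadicI N j ↔ (n - 1) / 2 ^ N = j - 1 := by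
  have hpow : j * 2 ^ N = (j - 1) * 2 ^ N + 2 ^ N := by ring
  rw [dyadicI, mem_Icc, Int.ediv_eq_iff_of_pos (by positivity)]
  constructor <;> rintro ⟨h₁, h₂⟩ <;> constructor <;> linarith

lemma card_dyadicI (N : ℕ) (j : ℤ) : (dyadicI N j).card = 2 ^ N := by
  rw [dyadicI, Int.card_Icc]
  have : j * 2 ^ N + 1 - ((j - 1) * 2 ^ N + 1) = ((2 ^ N : ℕ) : ℤ) := by push_cast; ring
  rw [this, Int.toNat_natCast]

lemma dyadicI_subset_of_le {N N' : ℕ} (h : N ≤ N') (j : ℤ) :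
    dyadicI N j ⊆ dyadicI N' ((j - 1) / 2 ^ (N' - N) + 1) := by
  intro k hk
  rw [mem_dyadicI_iff] at hk ⊢
  rw [add_sub_cancel_right, ← hk, Int.ediv_ediv_of_nonneg (by positivity), ← pow_add,
    Nat.add_sub_cancel' h]

lemma dyadicI_subset_of_mem {N N' : ℕ} {j j' m : ℤ} (h : N ≤ N') (hm : m ∈ dyadicI N j)
    (hm' : m ∈ dyadicI N' j') : dyadicI N j ⊆ dyadicI N' j' := by
  have hsub := dyadicI_subset_of_le h j
  have := mem_dyadicI_iff.1 (hsub hm)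
  rw [mem_dyadicI_iff.1 hm', sub_left_inj] at this
  rwa [← this] at hsub

lemma isIntervalZ_dyadicI (N : ℕ) (j : ℤ) : IsIntervalZ (dyadicI N j) :=
  ⟨_, _, by nlinarith [pow_pos (two_pos (α := ℤ)) N], rfl⟩

namespace IsDyadicZ

lemma subset_of_card_le {I J : Finset ℤ} (hI : IsDyadicZ I) (hJ : IsDyadicZ J)
    (hIJ : ¬Disjoint I J) (hcard : I.card ≤ J.card) : I ⊆ J := by
  obtain ⟨N, -, j, rfl⟩ := hI
  obtain ⟨N', -, j', rfl⟩ := hJ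
  obtain ⟨m, hm, hm'⟩ := not_disjoint_iff.1 hIJ
  rw [card_dyadicI, card_dyadicI, Nat.pow_le_pow_iff_right one_lt_two] at hcard
  exact dyadicI_subset_of_mem hcard hm hm'

lemma exists_parent {I : Finset ℤ} (hI : IsDyadicZ I) :
    ∃ I', IsDyadicZ I' ∧ IsIntervalZ I' ∧ I ⊆ I' ∧ I'.card = 2 * I.card := by
  obtain ⟨N, -, j, rfl⟩ := hI
  refine ⟨_, ⟨N + 1, N.succ_pos, _, rfl⟩, isIntervalZ_dyadicI _ _,
    dyadicI_subset_of_le N.le_succ j, ?_⟩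
  rw [card_dyadicI, card_dyadicI, pow_succ']

lemma nonempty {I : Finset ℤ} (hI : IsDyadicZ I) : I.Nonempty := by
  obtain ⟨N, -, j, rfl⟩ := hI
  exact card_pos.1 (by rw [card_dyadicI]; positivity)

end IsDyadicZ

lemma ofReal_lt_sum_ofReal_div_card_iff {α : Type*} {f : α → ℝ} (hf : ∀ k, 0 ≤ f k)
    {I : Finset α} (hI : I.Nonempty) {t : ℝ} (ht : 0 ≤ t) :
    ENNReal.ofReal t < (∑ k ∈ I, ENNReal.ofReal (f k)) / I.card ↔ t * I.card < ∑ k ∈ I, f k := by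
  have hc : (0 : ℝ) < I.card := by exact_mod_cast hI.card_pos
  rw [← ENNReal.ofReal_sum_of_nonneg fun k _ => hf k, ← ENNReal.ofReal_natCast,
    ← ENNReal.ofReal_div_of_pos hc, ENNReal.ofReal_lt_ofReal_iff_of_nonneg ht, lt_div_iff₀ hc]

lemma abs_avgI_le {a : ℤ → ℝ} {I : Finset ℤ} (hI : I.Nonempty) {lam : ℝ}
    (h : ∑ k ∈ I, |a k| ≤ lam * I.card) : |avgI a I| ≤ lam := by
  rw [avgI, abs_div, Nat.abs_cast, div_le_iff₀ (by exact_mod_cast hI.card_pos)]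
  exact (abs_sum_le_sum_abs _ _).trans h

lemma sum_abs_sub_avgI_le_of_Msharp_le {a : ℤ → ℝ} {I : Finset ℤ} (hI : IsIntervalZ I) {n : ℤ}
    (hn : n ∈ I) {s : ℝ} (hs : 0 ≤ s) (h : Msharp a n ≤ ENNReal.ofReal s) :
    ∑ k ∈ I, |a k - avgI a I| ≤ s * I.card := by
  have havg := (le_iSup₂_of_le I hI (le_iSup_of_le hn le_rfl)).trans h
  rw [← not_lt, ofReal_lt_sum_ofReal_div_card_iff (fun _ => abs_nonneg _) ⟨n, hn⟩ hs] at havg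
  exact not_lt.1 havg

def Heavy (a : ℤ → ℝ) (lam : ℝ) (I : Finset ℤ) : Prop :=
  IsDyadicZ I ∧ lam * I.card < ∑ k ∈ I, |a k|

/-- The Calderón–Zygmund intervals of `a` at height `lam`. -/
def MaximalHeavy (a : ℤ → ℝ) (lam : ℝ) (I : Finset ℤ) : Prop :=
  Heavy a lam I ∧ ∀ J, Heavy a lam J → ¬Disjoint J I → J ⊆ I

section Heavy

variable {a : ℤ → ℝ} {lam : ℝ}

lemma Heavy.mono {lam' : ℝ} (h : lam ≤ lam') {I : Finset ℤ} (hI : Heavy a lam' I) :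
    Heavy a lam I :=
  ⟨hI.1, lt_of_le_of_lt (by gcongr) hI.2⟩

lemma ofReal_lt_Md_iff (hlam : 0 ≤ lam) {n : ℤ} :
    ENNReal.ofReal lam < Md a n ↔ ∃ I, Heavy a lam I ∧ n ∈ I := by
  constructor
  · intro h
    simp only [Md, lt_iSup_iff] at h
    obtain ⟨I, hI, hn, h⟩ := h
    exact ⟨I, ⟨hI, (ofReal_lt_sum_ofReal_div_card_iff (fun _ => abs_nonneg _) hI.nonempty
      hlam).1 h⟩, hn⟩
  · rintro ⟨I, ⟨hI, h⟩, hn⟩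
    exact ((ofReal_lt_sum_ofReal_div_card_iff (fun _ => abs_nonneg _) hI.nonempty hlam).2
      h).trans_le (le_iSup₂_of_le I hI (le_iSup_of_le hn le_rfl))

lemma MaximalHeavy.eq_of_not_disjoint {I J : Finset ℤ} (hI : MaximalHeavy a lam I)
    (hJ : MaximalHeavy a lam J) (h : ¬Disjoint I J) : I = J :=
  subset_antisymm (hJ.2 I hI.1 h) (hI.2 J hJ.1 (by rwa [disjoint_comm]))

lemma exists_maximalHeavy_mem {B : ℕ} (hB : ∀ I, Heavy a lam I → I.card ≤ B) {n : ℤ}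
    (hn : ∃ I, Heavy a lam I ∧ n ∈ I) : ∃ I, MaximalHeavy a lam I ∧ n ∈ I := by
  classical
  obtain ⟨I₀, hI₀, hnI₀⟩ := hn
  obtain ⟨I, hI, hnI, hcard⟩ :=
    Nat.findGreatest_spec (P := fun k => ∃ I, Heavy a lam I ∧ n ∈ I ∧ I.card = k)
      (hB I₀ hI₀) ⟨I₀, hI₀, hnI₀, rfl⟩
  refine ⟨I, ⟨hI, fun J hJ hJI => ?_⟩, hnI⟩
  refine hJ.1.subset_of_card_le hI.1 hJI ?_
  by_contra! hlt
  have hIJ := hI.1.subset_of_card_le hJ.1 (by rwa [disjoint_comm]) hlt.le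
  have := Nat.le_findGreatest (P := fun k => ∃ I, Heavy a lam I ∧ n ∈ I ∧ I.card = k)
    (hB J hJ) ⟨J, hJ, hIJ hnI, rfl⟩
  omega

lemma exists_maximalHeavy_cover {B : ℕ} (hB : ∀ I, Heavy a lam I → I.card ≤ B)
    {F : Finset ℤ} (hF : ∀ n ∈ F, ∃ I, Heavy a lam I ∧ n ∈ I) :
    ∃ 𝓘 : Finset (Finset ℤ), (∀ I ∈ 𝓘, MaximalHeavy a lam I) ∧
      (𝓘 : Set (Finset ℤ)).PairwiseDisjoint id ∧ F ⊆ 𝓘.biUnion id := by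
  choose! Q hQ hmem using fun n hn => exists_maximalHeavy_mem hB (hF n hn)
  refine ⟨F.image Q, ?_, ?_, fun n hn => mem_biUnion.2 ⟨Q n, mem_image_of_mem Q hn, hmem n hn⟩⟩
  · simp only [mem_image, forall_exists_index, and_imp]
    rintro _ n hn rfl
    exact hQ n hn
  · simp only [coe_image]
    rintro _ ⟨n, hn, rfl⟩ _ ⟨m, hm, rfl⟩ hne
    exact not_not.1 (mt ((hQ n hn).eq_of_not_disjoint (hQ m hm)) hne)

end Heavy

lemma card_mul_le_of_forall_ofReal_lt_Md {b : ℤ → ℝ} {lam S : ℝ} (hlam : 0 < lam)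
    (hS : ∀ T : Finset ℤ, ∑ k ∈ T, |b k| ≤ S) {F : Finset ℤ}
    (hF : ∀ n ∈ F, ENNReal.ofReal lam < Md b n) : lam * F.card ≤ S := by
  have hB : ∀ I, Heavy b lam I → I.card ≤ ⌈S / lam⌉₊ := fun I hI => by
    have : (I.card : ℝ) ≤ S / lam := by
      rw [le_div_iff₀ hlam]
      linarith [hI.2, hS I]
    exact_mod_cast this.trans (Nat.le_ceil _)
  obtain ⟨𝓘, hmax, hdisj, hcover⟩ :=
    exists_maximalHeavy_cover hB fun n hn => (ofReal_lt_Md_iff hlam.le).1 (hF n hn)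
  calc lam * F.card ≤ lam * (𝓘.biUnion id).card := by gcongr
    _ = ∑ I ∈ 𝓘, lam * I.card := by rw [card_biUnion hdisj, Nat.cast_sum, mul_sum]; rfl
    _ ≤ ∑ I ∈ 𝓘, ∑ k ∈ I, |b k| := sum_le_sum fun I hI => (hmax I hI).1.2.le
    _ = ∑ k ∈ 𝓘.biUnion id, |b k| := (sum_biUnion hdisj).symm
    _ ≤ S := hS _

section GoodLambda

variable {a : ℤ → ℝ} {lam : ℝ}

lemma MaximalHeavy.sum_abs_le_of_subset {I I' : Finset ℤ} (hI : MaximalHeavy a lam I)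
    (hI' : IsDyadicZ I') (hsub : I ⊆ I') (hcard : I.card < I'.card) :
    ∑ k ∈ I', |a k| ≤ lam * I'.card := by
  by_contra! h
  obtain ⟨n, hn⟩ := hI.1.1.nonempty
  have := card_le_card (hI.2 I' ⟨hI', h⟩ (not_disjoint_iff.2 ⟨n, hsub hn, hn⟩))
  omega

open Classical in
lemma MaximalHeavy.card_filter_le {γ : ℝ} (hlam : 0 < lam) (hγ : 0 ≤ γ) {I : Finset ℤ}
    (hI : MaximalHeavy a lam I) :
    (#{n ∈ I | ENNReal.ofReal (2 * lam) < Md a n ∧ Msharp a n ≤ ENNReal.ofReal (γ * lam)} : ℝ)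
      ≤ 2 * γ * I.card := by
  set bad := {n ∈ I | ENNReal.ofReal (2 * lam) < Md a n ∧ Msharp a n ≤ ENNReal.ofReal (γ * lam)}
  rcases bad.eq_empty_or_nonempty with hempty | ⟨n₀, hn₀⟩
  · rw [hempty, card_empty, Nat.cast_zero]
    positivity
  obtain ⟨hn₀I, -, hsharp⟩ := mem_filter.1 hn₀
  obtain ⟨I', hI'dy, hI'int, hsub, hcard⟩ := hI.1.1.exists_parent
  set c := avgI a I'
  have hc : |c| ≤ lam := abs_avgI_le hI'dy.nonempty
    (hI.sum_abs_le_of_subset hI'dy hsub (by have := hI.1.1.nonempty.card_pos; omega))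
  have hosc : ∑ k ∈ I', |a k - c| ≤ γ * lam * I'.card :=
    sum_abs_sub_avgI_le_of_Msharp_le hI'int (hsub hn₀I) (by positivity) hsharp
  set b : ℤ → ℝ := fun k => if k ∈ I' then a k - c else 0
  have hbS : ∀ T : Finset ℤ, ∑ k ∈ T, |b k| ≤ γ * lam * I'.card := fun T => by
    simp only [b, apply_ite abs, abs_zero, sum_ite_mem]
    exact (sum_le_sum_of_subset_of_nonneg inter_subset_right fun _ _ _ => abs_nonneg _).trans
      hosc
  have hbMd : ∀ n ∈ bad, ENNReal.ofReal lam < Md b n := fun n hn => by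
    obtain ⟨hnI, hMd, -⟩ := mem_filter.1 hn
    obtain ⟨J, hJ, hnJ⟩ := (ofReal_lt_Md_iff (by positivity)).1 hMd
    have hJI : J ⊆ I := hI.2 J (hJ.mono (by linarith)) (not_disjoint_iff.2 ⟨n, hnJ, hnI⟩)
    refine (ofReal_lt_Md_iff hlam.le).2 ⟨J, ⟨hJ.1, ?_⟩, hnJ⟩
    have hcJ : |c| * J.card ≤ lam * J.card := by gcongr
    calc lam * J.card < ∑ k ∈ J, |a k| - |c| * J.card := by linarith [hJ.2]
      _ = ∑ k ∈ J, (|a k| - |c|) := by rw [sum_sub_distrib, sum_const, nsmul_eq_mul, mul_comm]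
      _ ≤ ∑ k ∈ J, |a k - c| := sum_le_sum fun k _ => abs_sub_abs_le_abs_sub _ _
      _ = ∑ k ∈ J, |b k| := sum_congr rfl fun k hk => by simp [b, hsub (hJI hk)]
  have := card_mul_le_of_forall_ofReal_lt_Md hlam hbS hbMd
  rw [hcard, Nat.cast_mul, Nat.cast_ofNat] at this
  exact le_of_mul_le_mul_left (by linarith) hlam

open Classical in
lemma card_filter_le_of_forall_mem_iff {γ : ℝ} (hlam : 0 < lam) (hγ : 0 ≤ γ) {F : Finset ℤ}
    (hF : ∀ n, n ∈ F ↔ ENNReal.ofReal lam < Md a n) :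
    (#{n ∈ F | ENNReal.ofReal (2 * lam) < Md a n ∧ Msharp a n ≤ ENNReal.ofReal (γ * lam)} : ℝ)
      ≤ 2 * γ * F.card := by
  have hHeavy : ∀ I, Heavy a lam I → I ⊆ F := fun I hI n hn =>
    (hF n).2 ((ofReal_lt_Md_iff hlam.le).2 ⟨I, hI, hn⟩)
  obtain ⟨𝓘, hmax, hdisj, hcover⟩ := exists_maximalHeavy_cover
    (fun I hI => card_le_card (hHeavy I hI)) fun n hn => (ofReal_lt_Md_iff hlam.le).1 ((hF n).1 hn)
  let bad (I : Finset ℤ) : Finset ℤ :=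
    {n ∈ I | ENNReal.ofReal (2 * lam) < Md a n ∧ Msharp a n ≤ ENNReal.ofReal (γ * lam)}
  calc ((bad F).card : ℝ) ≤ (𝓘.biUnion bad).card := by
        rw [← filter_biUnion]
        exact_mod_cast card_le_card (filter_subset_filter _ hcover)
    _ ≤ ∑ I ∈ 𝓘, ((bad I).card : ℝ) := by exact_mod_cast card_biUnion_le
    _ ≤ ∑ I ∈ 𝓘, 2 * γ * I.card := sum_le_sum fun I hI => (hmax I hI).card_filter_le hlam hγ
    _ = 2 * γ * (𝓘.biUnion id).card := by rw [card_biUnion hdisj, Nat.cast_sum, mul_sum]; rfl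
    _ ≤ 2 * γ * F.card := by
        gcongr
        exact biUnion_subset.2 fun I hI => hHeavy I (hmax I hI).1

end GoodLambda

/-- Good-λ inequality relating the dyadic and sharp maximal operators. -/
theorem statement6 :
    ∃ C : ℝ, 0 < C ∧
      ∀ (a : ℤ → ℝ) (p₀ : ℝ), 1 ≤ p₀ → (Summable fun m : ℤ => |a m| ^ p₀) →
        ∀ γ : ℝ, 0 < γ → ∀ lam : ℝ, 0 < lam →
          Measure.count {n : ℤ | ENNReal.ofReal (2 * lam) < Md a n ∧
              Msharp a n ≤ ENNReal.ofReal (γ * lam)} ≤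
            ENNReal.ofReal (C * γ) *
              Measure.count {n : ℤ | ENNReal.ofReal lam < Md a n} := by
  classical
  refine ⟨2, two_pos, fun a _ _ _ γ hγ lam hlam => ?_⟩
  rcases Set.finite_or_infinite {n : ℤ | ENNReal.ofReal lam < Md a n} with hE | hE
  · obtain ⟨F, hF⟩ := hE.exists_finset_coe
    have hmem : ∀ n, n ∈ F ↔ ENNReal.ofReal lam < Md a n := fun n => by
      rw [← mem_coe, hF, Set.mem_ofPred_eq]
    have hbad : {n : ℤ | ENNReal.ofReal (2 * lam) < Md a n ∧
        Msharp a n ≤ ENNReal.ofReal (γ * lam)} = ↑{n ∈ F |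
          ENNReal.ofReal (2 * lam) < Md a n ∧ Msharp a n ≤ ENNReal.ofReal (γ * lam)} := by
      ext n
      rw [coe_filter, Set.mem_ofPred_eq, Set.mem_ofPred_eq, hmem, iff_and_self]
      exact fun h => lt_of_le_of_lt (ENNReal.ofReal_le_ofReal (by linarith)) h.1
    rw [hbad, ← hF, Measure.count_apply_finset, Measure.count_apply_finset,
      ← ENNReal.ofReal_natCast, ← ENNReal.ofReal_natCast, ← ENNReal.ofReal_mul (by positivity)]
    exact ENNReal.ofReal_le_ofReal (card_filter_le_of_forall_mem_iff hlam hγ.le hmem)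
  · rw [Measure.count_apply_infinite hE, ENNReal.mul_top (by positivity)]
    exact le_top
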